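/- Let f : ℝ^d → ℝ be measurable and bounded, G ~ N(0, σ²I), p ∈ (0,1), and ε > 0. Then for all δ with ‖δ‖₂ < ε, h̲_{Φ(Φ⁻¹(p)−ε/σ)}(x) ≤ h_p(x+δ) ≤ h̄_{Φ(Φ⁻¹(p)+ε/σ)}(x). (Lemma 1 of Chiang et al., the percentile smoothing robustness bound.) -/

import Mathlib

open MeasureTheory ProbabilityTheory

noncomputable def gaussVec (d : ℕ) (σ : ℝ) : Measure (EuclideanSpace ℝ (Fin d)) :=
  (Measure.pi fun _ : Fin d => gaussianReal 0 (⟨σ ^ 2, sq_nonneg σ⟩ : NNReal)).map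
    (MeasurableEquiv.toLp 2 (Fin d → ℝ))

/-- Standard Gaussian CDF Φ. -/
noncomputable def Phi : ℝ → ℝ := fun x => cdf (gaussianReal 0 1) x

/-- Inverse of the standard Gaussian CDF. -/
noncomputable def PhiInv : ℝ → ℝ := Function.invFun Phi

/-- Lower percentile smoothing. -/
noncomputable def lowerPct {d : ℕ} (μ : Measure (EuclideanSpace ℝ (Fin d)))
    (f : EuclideanSpace ℝ (Fin d) → ℝ) (p : ℝ) (x : EuclideanSpace ℝ (Fin d)) : ℝ :=
  sSup {y : ℝ | (μ {g | f (x + g) ≤ y}).toReal ≤ p}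

/-- Upper percentile smoothing. -/
noncomputable def upperPct {d : ℕ} (μ : Measure (EuclideanSpace ℝ (Fin d)))
    (f : EuclideanSpace ℝ (Fin d) → ℝ) (p : ℝ) (x : EuclideanSpace ℝ (Fin d)) : ℝ :=
  sInf {y : ℝ | p ≤ (μ {g | f (x + g) ≤ y}).toReal}

section A
open MeasureTheory ProbabilityTheory Real Filter Set
open scoped NNReal ENNReal

lemma Phi_eq (x : ℝ) : Phi x = ((gaussianReal 0 1) (Set.Iic x)).toReal := by
  simp [Phi, cdf_eq_real, measureReal_def]

lemma gauss_meas_pos {v : ℝ≥0} (hv : v ≠ 0) {s : Set ℝ} (hs : MeasurableSet s)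
    (h : 0 < volume s) : 0 < gaussianReal 0 v s := by
  rw [gaussianReal_apply 0 hv s, pos_iff_ne_zero]
  intro hc
  rw [setLIntegral_eq_zero_iff hs (measurable_gaussianPDF 0 v)] at hc
  have h3 : s ≤ᵐ[volume] (∅ : Set ℝ) := by
    filter_upwards [hc] with x hx hxs
    exact absurd (hx hxs) (ne_of_gt (gaussianPDF_pos 0 hv x))
  exact absurd (measure_mono_null_ae h3 measure_empty) (ne_of_gt h)

lemma gauss_singleton {v : ℝ≥0} (hv : v ≠ 0) (t : ℝ) : gaussianReal 0 v {t} = 0 :=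
  (gaussianReal_absolutelyContinuous 0 hv) (Real.volume_singleton)

lemma Phi_strictMono : StrictMono Phi := by
  intro a b hab
  rw [Phi_eq, Phi_eq]
  have h1 : (gaussianReal 0 1) (Set.Iic a) < (gaussianReal 0 1) (Set.Iic b) := by
    have hpos : 0 < gaussianReal 0 1 (Set.Ioc a b) := by
      apply gauss_meas_pos one_ne_zero measurableSet_Ioc
      rw [Real.volume_Ioc]; simp [hab]
    have hd : Set.Iic b = Set.Iic a ∪ Set.Ioc a b := (Set.Iic_union_Ioc_eq_Iic hab.le).symm
    rw [hd, measure_union _ measurableSet_Ioc]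
    · exact ENNReal.lt_add_right (measure_ne_top _ _) (ne_of_gt hpos)
    · rw [Set.disjoint_left]
      intro y h1 h2
      exact absurd h2.1 (not_lt.2 h1)
  exact (ENNReal.toReal_lt_toReal (measure_ne_top _ _) (measure_ne_top _ _)).mpr h1

lemma Phi_pos (x : ℝ) : 0 < Phi x := by
  rw [Phi_eq]
  refine ENNReal.toReal_pos (ne_of_gt ?_) (measure_ne_top _ _)
  exact gauss_meas_pos one_ne_zero measurableSet_Iic (by simp)

lemma Phi_lt_one (x : ℝ) : Phi x < 1 := by
  rw [Phi_eq]
  have h : (gaussianReal 0 1) (Set.Iic x) < 1 := by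
    have hpos : 0 < gaussianReal 0 1 (Set.Ioi x) :=
      gauss_meas_pos one_ne_zero measurableSet_Ioi (by simp)
    have hu : ((gaussianReal 0 1) (Set.Iic x) : ℝ≥0∞) + (gaussianReal 0 1) (Set.Ioi x) = 1 := by
      have := measure_add_measure_compl (μ := gaussianReal 0 1) (measurableSet_Iic (a := x))
      rwa [Set.compl_Iic, measure_univ] at this
    calc (gaussianReal 0 1) (Set.Iic x) < (gaussianReal 0 1) (Set.Iic x) + (gaussianReal 0 1) (Set.Ioi x) :=
          ENNReal.lt_add_right (measure_ne_top _ _) (ne_of_gt hpos)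
      _ = 1 := hu
  have := (ENNReal.toReal_lt_toReal (measure_ne_top _ _) (by simp)).mpr h
  simpa using this

lemma Phi_lipschitz : LipschitzWith 1 Phi := by
  have key : ∀ a b : ℝ, a ≤ b → Phi b - Phi a ≤ b - a := by
    intro a b hab
    rw [Phi_eq, Phi_eq]
    have hd : Set.Iic b = Set.Iic a ∪ Set.Ioc a b := (Set.Iic_union_Ioc_eq_Iic hab).symm
    have hmeas : (gaussianReal 0 1) (Set.Iic b) = (gaussianReal 0 1) (Set.Iic a) + (gaussianReal 0 1) (Set.Ioc a b) := by
      rw [hd, measure_union _ measurableSet_Ioc]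
      rw [Set.disjoint_left]
      intro y h1 h2
      exact absurd h2.1 (not_lt.2 h1)
    have hIoc : (gaussianReal 0 1) (Set.Ioc a b) ≤ ENNReal.ofReal (b - a) := by
      rw [gaussianReal_apply 0 one_ne_zero]
      calc ∫⁻ y in Set.Ioc a b, gaussianPDF 0 1 y ∂volume
          ≤ ∫⁻ _ in Set.Ioc a b, 1 ∂volume := by
            apply setLIntegral_mono measurable_const
            intro y _
            rw [gaussianPDF]
            refine ENNReal.ofReal_le_one.mpr ?_
            rw [gaussianPDFReal]
            have h1 : Real.exp (-(y - 0) ^ 2 / (2 * (1:ℝ≥0))) ≤ 1 := by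
              apply Real.exp_le_one_iff.mpr
              have : (0:ℝ) ≤ (y - 0)^2 := sq_nonneg _
              have h2 : (0:ℝ) < 2 * (1:ℝ≥0) := by norm_num
              apply div_nonpos_of_nonpos_of_nonneg (by linarith) h2.le
            have h0 : (Real.sqrt (2 * Real.pi * (1:ℝ≥0)))⁻¹ ≤ 1 := by
              rw [inv_le_one_iff₀]
              right
              rw [show ((2:ℝ) * Real.pi * (1:ℝ≥0)) = 2 * Real.pi by push_cast; ring]
              refine Real.one_le_sqrt.mpr ?_
              nlinarith [Real.pi_gt_three]
            calc (Real.sqrt (2 * Real.pi * (1:ℝ≥0)))⁻¹ * Real.exp (-(y - 0) ^ 2 / (2 * (1:ℝ≥0)))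
                ≤ 1 * 1 := by
                  apply mul_le_mul h0 h1 (Real.exp_nonneg _) (by norm_num)
              _ = 1 := by norm_num
        _ = ENNReal.ofReal (b - a) := by
            rw [setLIntegral_const, Real.volume_Ioc, one_mul]
    rw [hmeas, ENNReal.toReal_add (measure_ne_top _ _) (measure_ne_top _ _)]
    have := ENNReal.toReal_mono (by simp) hIoc
    rw [ENNReal.toReal_ofReal (by linarith)] at this
    linarith
  apply LipschitzWith.of_dist_le_mul
  intro a b
  rw [Real.dist_eq, Real.dist_eq]
  rcases le_total a b with h | h
  · have h1 := key a b h
    have h2 : Phi a ≤ Phi b := (Phi_strictMono.monotone h)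
    rw [abs_sub_comm, abs_of_nonneg (by linarith), abs_of_nonpos (by linarith)]
    simpa using by linarith
  · have h1 := key b a h
    have h2 : Phi b ≤ Phi a := (Phi_strictMono.monotone h)
    rw [abs_of_nonneg (by linarith), abs_of_nonneg (by linarith)]
    simpa using by linarith

lemma Phi_surjOn : ∀ q ∈ Set.Ioo (0:ℝ) 1, ∃ z, Phi z = q := by
  intro q hq
  have hc : Continuous Phi := Phi_lipschitz.continuous
  have ht : Tendsto Phi atTop (nhds 1) := tendsto_cdf_atTop (gaussianReal 0 1)
  have hb : Tendsto Phi atBot (nhds 0) := tendsto_cdf_atBot (gaussianReal 0 1)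
  obtain ⟨a, ha⟩ : ∃ a, Phi a < q := by
    have := hb.eventually (eventually_lt_nhds hq.1)
    obtain ⟨a, ha⟩ := this.exists
    exact ⟨a, ha⟩
  obtain ⟨b, hbq⟩ : ∃ b, q < Phi b := by
    have := ht.eventually (eventually_gt_nhds hq.2)
    obtain ⟨b, hbb⟩ := this.exists
    exact ⟨b, hbb⟩
  have hmem : q ∈ Set.Icc (Phi a) (Phi b) := ⟨ha.le, hbq.le⟩
  obtain ⟨z, hz⟩ := intermediate_value_univ a b hc hmem
  exact ⟨z, hz⟩

lemma Phi_PhiInv {q : ℝ} (hq : q ∈ Set.Ioo (0:ℝ) 1) : Phi (PhiInv q) = q :=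
  Function.invFun_eq (Phi_surjOn q hq)

lemma PhiInv_Phi (t : ℝ) : PhiInv (Phi t) = t :=
  Function.leftInverse_invFun Phi_strictMono.injective t

end A
section B
open MeasureTheory ProbabilityTheory Real Filter Set
open scoped NNReal ENNReal

lemma gauss_Ioi_toReal (t : ℝ) :
    ((gaussianReal 0 1) (Set.Ioi t)).toReal = 1 - Phi t := by
  have hu := measure_add_measure_compl (μ := gaussianReal 0 1) (measurableSet_Iic (a := t))
  rw [Set.compl_Iic, measure_univ] at hu
  have h1 : ((gaussianReal 0 1) (Set.Iic t)).toReal + ((gaussianReal 0 1) (Set.Ioi t)).toReal = 1 := by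
    rw [← ENNReal.toReal_add (measure_ne_top _ _) (measure_ne_top _ _), hu]
    simp
  rw [← Phi_eq] at h1
  linarith

lemma gauss_Ici_toReal (t : ℝ) :
    ((gaussianReal 0 1) (Set.Ici t)).toReal = 1 - Phi t := by
  have h : (gaussianReal 0 1) (Set.Ici t) = (gaussianReal 0 1) (Set.Ioi t) := by
    rw [← Set.Ioi_union_left]
    refine le_antisymm ?_ (measure_mono Set.subset_union_left)
    calc (gaussianReal 0 1) (Set.Ioi t ∪ {t}) ≤ (gaussianReal 0 1) (Set.Ioi t) + (gaussianReal 0 1) {t} :=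
          measure_union_le _ _
      _ = (gaussianReal 0 1) (Set.Ioi t) := by rw [gauss_singleton one_ne_zero t, add_zero]
    
  rw [h, gauss_Ioi_toReal]

lemma gauss_map_neg : (gaussianReal 0 1).map (fun x => -x) = gaussianReal 0 1 := by
  have h := gaussianReal_map_const_mul (μ := 0) (v := 1) (-1)
  have h2 : (fun x : ℝ => (-1 : ℝ) * x) = (fun x : ℝ => -x) := by funext x; ring
  rw [h2] at h
  rw [h]
  congr 1
  · ring
  · ext : 1
    push_cast
    norm_num

lemma Phi_neg (t : ℝ) : Phi (-t) = 1 - Phi t := by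
  have h : (gaussianReal 0 1) (Set.Iic (-t)) = (gaussianReal 0 1) (Set.Ici t) := by
    conv_rhs => rw [← gauss_map_neg]
    rw [Measure.map_apply measurable_neg measurableSet_Ici]
    congr 1
    ext x
    simp [neg_le]
  rw [Phi_eq, h, gauss_Ici_toReal]

lemma one_sub_Phi (t : ℝ) : 1 - Phi t = Phi (-t) := (Phi_neg t).symm

lemma gauss_scaled_eq (u : ℝ) (hu : 0 < u) (V : ℝ≥0) (hV : (V:ℝ) = u^2) :
    gaussianReal 0 V = (gaussianReal 0 1).map (fun x => u * x) := by
  rw [gaussianReal_map_const_mul (μ := 0) (v := 1) u]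
  congr 1
  · ring
  · ext : 1
    push_cast
    rw [hV]
    ring

lemma gauss_Iic_scaled (u : ℝ) (hu : 0 < u) (V : ℝ≥0) (hV : (V:ℝ) = u^2) (t : ℝ) :
    ((gaussianReal 0 V) (Set.Iic t)).toReal = Phi (t / u) := by
  rw [gauss_scaled_eq u hu V hV, Measure.map_apply (measurable_const_mul u) measurableSet_Iic]
  have h : (fun x : ℝ => u * x) ⁻¹' Set.Iic t = Set.Iic (t / u) := by
    ext x
    simp [Set.mem_Iic, le_div_iff₀ hu, mul_comm]
  rw [h, ← Phi_eq]

lemma gauss_Ici_scaled (u : ℝ) (hu : 0 < u) (V : ℝ≥0) (hV : (V:ℝ) = u^2) (t : ℝ) :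
    ((gaussianReal 0 V) (Set.Ici t)).toReal = Phi (-(t / u)) := by
  rw [gauss_scaled_eq u hu V hV, Measure.map_apply (measurable_const_mul u) measurableSet_Ici]
  have h : (fun x : ℝ => u * x) ⁻¹' Set.Ici t = Set.Ici (t / u) := by
    ext x
    simp [Set.mem_Ici, div_le_iff₀ hu, mul_comm]
  rw [h, gauss_Ici_toReal, one_sub_Phi]

end B
section C
open MeasureTheory ProbabilityTheory Real Filter Set
open scoped NNReal ENNReal

lemma pdf_conv_identity {a b : ℝ≥0} (ha : a ≠ 0) (hb : b ≠ 0) (t x : ℝ) :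
    gaussianPDFReal 0 a x * gaussianPDFReal 0 b (t - x) =
      gaussianPDFReal 0 (a + b) t * gaussianPDFReal (t * a / (a + b)) (a * b / (a + b)) x := by
  have hA : (0:ℝ) < a := lt_of_le_of_ne (a.coe_nonneg) (by exact_mod_cast (Ne.symm ha))
  have hB : (0:ℝ) < b := lt_of_le_of_ne (b.coe_nonneg) (by exact_mod_cast (Ne.symm hb))
  have hAB : (0:ℝ) < (a:ℝ) + b := by linarith
  rw [gaussianPDFReal, gaussianPDFReal, gaussianPDFReal, gaussianPDFReal]
  push_cast
  have hconst : (Real.sqrt (2 * π * a))⁻¹ * (Real.sqrt (2 * π * b))⁻¹ =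
      (Real.sqrt (2 * π * ((a:ℝ) + b)))⁻¹ * (Real.sqrt (2 * π * ((a:ℝ) * b / ((a:ℝ) + b))))⁻¹ := by
    rw [← mul_inv, ← mul_inv, ← Real.sqrt_mul (by positivity), ← Real.sqrt_mul (by positivity)]
    congr 1
    field_simp
  have hexp : Real.exp (-(x - 0) ^ 2 / (2 * a)) * Real.exp (-(t - x - 0) ^ 2 / (2 * b)) =
      Real.exp (-(t - 0) ^ 2 / (2 * ((a:ℝ) + b))) *
        Real.exp (-(x - t * a / ((a:ℝ) + b)) ^ 2 / (2 * ((a:ℝ) * b / ((a:ℝ) + b)))) := by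
    rw [← Real.exp_add, ← Real.exp_add]
    congr 1
    field_simp
    ring
  calc (Real.sqrt (2 * π * a))⁻¹ * Real.exp (-(x - 0) ^ 2 / (2 * a)) *
        ((Real.sqrt (2 * π * b))⁻¹ * Real.exp (-(t - x - 0) ^ 2 / (2 * b)))
      = ((Real.sqrt (2 * π * a))⁻¹ * (Real.sqrt (2 * π * b))⁻¹) *
        (Real.exp (-(x - 0) ^ 2 / (2 * a)) * Real.exp (-(t - x - 0) ^ 2 / (2 * b))) := by ring
    _ = ((Real.sqrt (2 * π * ((a:ℝ) + b)))⁻¹ * (Real.sqrt (2 * π * ((a:ℝ) * b / ((a:ℝ) + b))))⁻¹) *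
        (Real.exp (-(t - 0) ^ 2 / (2 * ((a:ℝ) + b))) *
          Real.exp (-(x - t * a / ((a:ℝ) + b)) ^ 2 / (2 * ((a:ℝ) * b / ((a:ℝ) + b))))) := by
        rw [hconst, hexp]
    _ = _ := by ring

lemma gaussian_conv (a b : ℝ≥0) :
    Measure.map (fun p : ℝ × ℝ => p.1 + p.2) ((gaussianReal 0 a).prod (gaussianReal 0 b)) =
      gaussianReal 0 (a + b) := by
  by_cases ha : a = 0
  · subst ha
    rw [gaussianReal_zero_var, Measure.dirac_prod, Measure.map_map (by fun_prop) (by fun_prop)]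
    have h : ((fun p : ℝ × ℝ => p.1 + p.2) ∘ Prod.mk (0:ℝ)) = (fun x : ℝ => 0 + x) := rfl
    rw [h, gaussianReal_map_const_add, zero_add, zero_add]
  by_cases hb : b = 0
  · subst hb
    rw [gaussianReal_zero_var, Measure.prod_dirac, Measure.map_map (by fun_prop) (by fun_prop)]
    have h : ((fun p : ℝ × ℝ => p.1 + p.2) ∘ (fun x : ℝ => (x, (0:ℝ)))) = (fun x : ℝ => x + 0) := rfl
    rw [h, gaussianReal_map_add_const, add_zero, add_zero]
  -- main case
  have hab : a + b ≠ 0 := fun h => ha ((add_eq_zero.mp h).1)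
  set V' : ℝ≥0 := a * b / (a + b) with hV'def
  have hV' : V' ≠ 0 := by
    rw [hV'def]
    intro h
    rcases div_eq_zero_iff.mp h with h1 | h1
    · exact absurd h1 (mul_ne_zero ha hb)
    · exact hab h1
  have hVc : (V' : ℝ) = (a : ℝ) * b / ((a : ℝ) + b) := by push_cast [hV'def]; ring
  have hadd : Measurable (fun p : ℝ × ℝ => p.1 + p.2) := by fun_prop
  ext s hs
  rw [Measure.map_apply hadd hs, Measure.prod_apply (hadd hs)]
  have hind : Measurable (s.indicator (fun _ => (1 : ℝ≥0∞))) := measurable_const.indicator hs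
  have step1 : ∀ x : ℝ, (gaussianReal 0 b) (Prod.mk x ⁻¹' ((fun p : ℝ × ℝ => p.1 + p.2) ⁻¹' s)) =
      ∫⁻ u : ℝ, gaussianPDF 0 b (u - x) * s.indicator (fun _ => (1 : ℝ≥0∞)) u ∂volume := by
    intro x
    have hset : (Prod.mk x ⁻¹' ((fun p : ℝ × ℝ => p.1 + p.2) ⁻¹' s)) = {y : ℝ | x + y ∈ s} := rfl
    rw [hset]
    have hmeas : MeasurableSet {y : ℝ | x + y ∈ s} := (measurable_const_add x) hs
    rw [gaussianReal_apply 0 hb, ← lintegral_indicator hmeas]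
    have htrans := lintegral_add_left_eq_self (μ := volume)
      (fun u : ℝ => gaussianPDF 0 b (u - x) * s.indicator (fun _ => (1 : ℝ≥0∞)) u) x
    rw [← htrans]
    congr 1
    funext y
    simp only [add_sub_cancel_left]
    by_cases hy : x + y ∈ s
    · rw [Set.indicator_of_mem (by exact hy), Set.indicator_of_mem (by exact hy), mul_one]
    · rw [Set.indicator_of_notMem (by exact hy), Set.indicator_of_notMem (by exact hy), mul_zero]
  simp_rw [step1]
  rw [gaussianReal_of_var_ne_zero 0 ha,
    lintegral_withDensity_eq_lintegral_mul _ (measurable_gaussianPDF 0 a)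
      (by
        apply Measurable.lintegral_prod_right (f := fun x u => gaussianPDF 0 b (u - x) * s.indicator (fun _ => (1 : ℝ≥0∞)) u)
        exact ((measurable_gaussianPDF 0 b).comp (measurable_snd.sub measurable_fst)).mul
          (hind.comp measurable_snd))]
  have hswap_core := lintegral_lintegral_swap (μ := (volume : Measure ℝ)) (ν := (volume : Measure ℝ))
    (f := fun x u => gaussianPDF 0 a x * (gaussianPDF 0 b (u - x) *
      s.indicator (fun _ => (1 : ℝ≥0∞)) u))
    (by
      apply Measurable.aemeasurable
      apply Measurable.mul
      · exact (measurable_gaussianPDF 0 a).comp measurable_fst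
      · exact ((measurable_gaussianPDF 0 b).comp (measurable_snd.sub measurable_fst)).mul
          (hind.comp measurable_snd))
  have hswap : ∫⁻ x : ℝ, (gaussianPDF 0 a * fun x =>
        ∫⁻ u : ℝ, gaussianPDF 0 b (u - x) * s.indicator (fun _ => (1 : ℝ≥0∞)) u ∂volume) x ∂volume =
      ∫⁻ u : ℝ, ∫⁻ x : ℝ, gaussianPDF 0 a x * (gaussianPDF 0 b (u - x) *
        s.indicator (fun _ => (1 : ℝ≥0∞)) u) ∂volume ∂volume := by
    rw [← hswap_core]
    simp only [Pi.mul_apply]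
    congr 1
    funext x
    exact (lintegral_const_mul _ (((measurable_gaussianPDF 0 b).comp (measurable_id.sub measurable_const)).mul hind)).symm
  rw [hswap]
  have step3 : ∀ u : ℝ, ∫⁻ x : ℝ, gaussianPDF 0 a x * (gaussianPDF 0 b (u - x) *
      s.indicator (fun _ => (1 : ℝ≥0∞)) u) ∂volume =
      s.indicator (fun _ => (1 : ℝ≥0∞)) u * gaussianPDF 0 (a + b) u := by
    intro u
    have hpoint : ∀ x : ℝ, gaussianPDF 0 a x * gaussianPDF 0 b (u - x) =
        ENNReal.ofReal (gaussianPDFReal 0 (a + b) u) * gaussianPDF (u * a / ((a:ℝ) + b)) V' x := by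
      intro x
      rw [gaussianPDF, gaussianPDF, gaussianPDF,
        ← ENNReal.ofReal_mul (gaussianPDFReal_nonneg 0 a x),
        ← ENNReal.ofReal_mul (gaussianPDFReal_nonneg 0 (a+b) u)]
      congr 1
      rw [pdf_conv_identity ha hb u x]
    calc ∫⁻ x : ℝ, gaussianPDF 0 a x * (gaussianPDF 0 b (u - x) *
          s.indicator (fun _ => (1 : ℝ≥0∞)) u) ∂volume
        = ∫⁻ x : ℝ, (gaussianPDF 0 a x * gaussianPDF 0 b (u - x)) *
            s.indicator (fun _ => (1 : ℝ≥0∞)) u ∂volume := by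
          congr 1; funext x; ring
      _ = ∫⁻ x : ℝ, (ENNReal.ofReal (gaussianPDFReal 0 (a + b) u) *
            gaussianPDF (u * a / ((a:ℝ) + b)) V' x) * s.indicator (fun _ => (1 : ℝ≥0∞)) u ∂volume := by
          simp_rw [hpoint]
      _ = ∫⁻ x : ℝ, (ENNReal.ofReal (gaussianPDFReal 0 (a + b) u) * s.indicator (fun _ => (1 : ℝ≥0∞)) u) *
            gaussianPDF (u * a / ((a:ℝ) + b)) V' x ∂volume := by
          congr 1; funext x; ring
      _ = (ENNReal.ofReal (gaussianPDFReal 0 (a + b) u) * s.indicator (fun _ => (1 : ℝ≥0∞)) u) *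
            ∫⁻ x : ℝ, gaussianPDF (u * a / ((a:ℝ) + b)) V' x ∂volume := by
          rw [lintegral_const_mul _ (measurable_gaussianPDF _ V')]
      _ = s.indicator (fun _ => (1 : ℝ≥0∞)) u * gaussianPDF 0 (a + b) u := by
          rw [lintegral_gaussianPDF_eq_one _ hV', mul_one, gaussianPDF, mul_comm]
  simp_rw [step3]
  rw [gaussianReal_of_var_ne_zero 0 hab, withDensity_apply _ hs]
  rw [← lintegral_indicator hs]
  congr 1
  funext u
  by_cases hu : u ∈ s
  · rw [Set.indicator_of_mem hu, Set.indicator_of_mem hu, one_mul]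
  · rw [Set.indicator_of_notMem hu, Set.indicator_of_notMem hu, zero_mul]

end C
section C2
open MeasureTheory ProbabilityTheory Real Filter Set
open scoped NNReal ENNReal

lemma map_sum_gauss : ∀ (n : ℕ) (v : ℝ≥0) (c : Fin n → ℝ) (w : ℝ≥0),
    ((w : ℝ) = ∑ i, (c i)^2) →
    Measure.map (fun y : Fin n → ℝ => ∑ i, c i * y i)
      (Measure.pi fun _ => gaussianReal 0 v) = gaussianReal 0 (w * v) := by
  intro n
  induction n with
  | zero =>
    intro v c w hw
    have hw0 : w = 0 := by
      ext; rw [hw]; simp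
    subst hw0
    have hfun : (fun y : Fin 0 → ℝ => ∑ i, c i * y i) = (fun _ => (0:ℝ)) := by
      funext y; simp
    rw [hfun, Measure.map_const, measure_univ, one_smul, zero_mul, gaussianReal_zero_var]
  | succ n ih =>
    intro v c w hw
    set w' : ℝ≥0 := ⟨∑ j : Fin n, (c j.succ)^2, by positivity⟩ with hw'def
    set c0sq : ℝ≥0 := ⟨(c 0)^2, sq_nonneg _⟩ with hc0def
    have hwsum : w = c0sq + w' := by
      ext
      rw [hw, Fin.sum_univ_succ]
      push_cast [hw'def, hc0def]
      rfl
    let e := MeasurableEquiv.piFinSuccAbove (fun _ : Fin (n+1) => ℝ) 0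
    have hmp := measurePreserving_piFinSuccAbove (fun _ : Fin (n+1) => gaussianReal 0 v) 0
    have hS : Measurable (fun y : Fin (n+1) → ℝ => ∑ i, c i * y i) := by fun_prop
    have hφψ : Measurable (fun p : ℝ × (Fin n → ℝ) => c 0 * p.1 + ∑ j : Fin n, c j.succ * p.2 j) := by
      fun_prop
    have hfun : (fun y : Fin (n+1) → ℝ => ∑ i, c i * y i) =
        (fun p : ℝ × (Fin n → ℝ) => c 0 * p.1 + ∑ j : Fin n, c j.succ * p.2 j) ∘ ⇑e := by
      funext y
      simp only [Function.comp_apply, e, MeasurableEquiv.piFinSuccAbove_apply]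
      rw [Fin.sum_univ_succ]
      simp [Fin.insertNthEquiv, Fin.zero_succAbove, Fin.tail]
    rw [hfun, ← Measure.map_map hφψ e.measurable, hmp.map_eq]
    have hprodmap : (fun p : ℝ × (Fin n → ℝ) => c 0 * p.1 + ∑ j : Fin n, c j.succ * p.2 j) =
        (fun q : ℝ × ℝ => q.1 + q.2) ∘ (Prod.map (fun x : ℝ => c 0 * x)
          (fun y : Fin n → ℝ => ∑ j : Fin n, c j.succ * y j)) := rfl
    rw [hprodmap, ← Measure.map_map (by fun_prop) (by fun_prop)]
    rw [← Measure.map_prod_map _ _ (by fun_prop) (by fun_prop)]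
    rw [gaussianReal_map_const_mul (c 0), ih v (fun j => c j.succ) w' rfl, mul_zero]
    rw [gaussian_conv]
    congr 1
    ext
    push_cast [NNReal.coe_mk]
    rw [hw, Fin.sum_univ_succ]
    simp only [hw'def, NNReal.coe_mk]
    ring_nf
    rfl
end C2
section D
open MeasureTheory ProbabilityTheory Real Filter Set
open scoped NNReal ENNReal

lemma lintegral_pi_prod {μ : Measure ℝ} [SigmaFinite μ] :
    ∀ (n : ℕ) (f : Fin n → ℝ → ℝ≥0∞), (∀ i, Measurable (f i)) →
    ∫⁻ y, ∏ i, f i (y i) ∂(Measure.pi fun _ : Fin n => μ) = ∏ i, ∫⁻ x, f i x ∂μ := by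
  intro n
  induction n with
  | zero =>
    intro f hf
    rw [Measure.pi_of_empty]
    simp
  | succ n ih =>
    intro f hf
    let e := MeasurableEquiv.piFinSuccAbove (fun _ : Fin (n+1) => ℝ) 0
    have hmp := measurePreserving_piFinSuccAbove (fun _ : Fin (n+1) => μ) 0
    have hg : Measurable (fun p : ℝ × (Fin n → ℝ) => f 0 p.1 * ∏ j : Fin n, f j.succ (p.2 j)) := by
      apply Measurable.mul
      · exact (hf 0).comp measurable_fst
      · exact Finset.measurable_prod _ (fun j _ => (hf j.succ).comp ((measurable_pi_apply j).comp measurable_snd))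
    have step : ∫⁻ y, ∏ i, f i (y i) ∂(Measure.pi fun _ : Fin (n+1) => μ) =
        ∫⁻ p : ℝ × (Fin n → ℝ), f 0 p.1 * ∏ j : Fin n, f j.succ (p.2 j)
          ∂(μ.prod (Measure.pi fun _ : Fin n => μ)) := by
      rw [← hmp.map_eq, lintegral_map hg e.measurable]
      apply lintegral_congr
      intro y
      simp only [e, MeasurableEquiv.piFinSuccAbove_apply]
      rw [Fin.prod_univ_succ]
      simp [Fin.insertNthEquiv, Fin.zero_succAbove, Fin.tail]
    rw [step, lintegral_prod _ hg.aemeasurable]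
    calc ∫⁻ x, ∫⁻ y, f 0 x * ∏ j : Fin n, f j.succ (y j) ∂(Measure.pi fun _ : Fin n => μ) ∂μ
        = ∫⁻ x, f 0 x * ∫⁻ y, ∏ j : Fin n, f j.succ (y j) ∂(Measure.pi fun _ : Fin n => μ) ∂μ := by
          congr 1
          funext x
          exact lintegral_const_mul _ (Finset.measurable_prod _ (fun j _ => (hf j.succ).comp (measurable_pi_apply j)))
      _ = (∫⁻ x, f 0 x ∂μ) * ∫⁻ y, ∏ j : Fin n, f j.succ (y j) ∂(Measure.pi fun _ : Fin n => μ) := by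
          rw [lintegral_mul_const _ (hf 0)]
      _ = ∏ i : Fin (n+1), ∫⁻ x, f i x ∂μ := by
          rw [ih (fun j => f j.succ) (fun j => hf j.succ), Fin.prod_univ_succ]

lemma tilt_one_dim {v : ℝ≥0} (hv : v ≠ 0) (μc : ℝ) :
    (gaussianReal 0 v).withDensity
      (fun s : ℝ => ENNReal.ofReal (Real.exp ((2 * s * μc - μc ^ 2) / (2 * (v : ℝ))))) =
      gaussianReal μc v := by
  have hvr : (0:ℝ) < v := lt_of_le_of_ne v.coe_nonneg (by exact_mod_cast (Ne.symm hv))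
  rw [gaussianReal_of_var_ne_zero 0 hv, gaussianReal_of_var_ne_zero μc hv,
    ← withDensity_mul _ (measurable_gaussianPDF 0 v) (by fun_prop)]
  congr 1
  funext s
  simp only [Pi.mul_apply, gaussianPDF]
  rw [← ENNReal.ofReal_mul (gaussianPDFReal_nonneg 0 v s)]
  congr 1
  rw [gaussianPDFReal, gaussianPDFReal, mul_assoc, ← Real.exp_add]
  congr 2
  field_simp
  ring
end D
section D2
open MeasureTheory ProbabilityTheory Real Filter Set
open scoped NNReal ENNReal

lemma pi_tilt {d : ℕ} {v : ℝ≥0} (hv : v ≠ 0) (c : Fin d → ℝ) :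
    Measure.map (fun y : Fin d → ℝ => y + c) (Measure.pi fun _ : Fin d => gaussianReal 0 v) =
      (Measure.pi fun _ : Fin d => gaussianReal 0 v).withDensity
        (fun y => ENNReal.ofReal (Real.exp
          ((2 * (∑ i, c i * y i) - ∑ i, (c i)^2) / (2 * (v : ℝ))))) := by
  set P := Measure.pi fun _ : Fin d => gaussianReal 0 v with hP
  set r : Fin d → ℝ → ℝ≥0∞ :=
    fun i t => ENNReal.ofReal (Real.exp ((2 * t * c i - (c i) ^ 2) / (2 * (v : ℝ)))) with hr
  have hrm : ∀ i, Measurable (r i) := by intro i; rw [hr]; fun_prop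
  have hF : (fun y : Fin d → ℝ => ENNReal.ofReal (Real.exp
      ((2 * (∑ i, c i * y i) - ∑ i, (c i)^2) / (2 * (v : ℝ))))) = fun y => ∏ i, r i (y i) := by
    funext y
    rw [hr]
    rw [← ENNReal.ofReal_prod_of_nonneg (fun i _ => Real.exp_nonneg _)]
    congr 1
    rw [← Real.exp_sum]
    congr 1
    rw [← Finset.sum_div, Finset.sum_sub_distrib]
    congr 2
    rw [Finset.mul_sum]
    apply Finset.sum_congr rfl
    intro i _
    ring
  have hmapeq : Measure.map (fun y : Fin d → ℝ => y + c) P =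
      Measure.pi (fun i : Fin d => gaussianReal (c i) v) := by
    have hcoord : ∀ i : Fin d, MeasurePreserving (fun t : ℝ => t + c i)
        (gaussianReal 0 v) (gaussianReal (c i) v) := by
      intro i
      refine ⟨measurable_add_const _, ?_⟩
      rw [gaussianReal_map_add_const (c i), zero_add]
    have := measurePreserving_pi (fun _ : Fin d => gaussianReal 0 v)
      (fun i : Fin d => gaussianReal (c i) v) hcoord
    have hfun : (fun y : Fin d → ℝ => y + c) = (fun (y : Fin d → ℝ) (i : Fin d) => y i + c i) := by
      funext y; funext i; simp
    rw [hfun]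
    exact this.map_eq
  rw [hmapeq, hF]
  symm
  apply Eq.symm
  apply Measure.pi_eq
  intro s hs
  rw [withDensity_apply _ (MeasurableSet.univ_pi hs), ← lintegral_indicator (MeasurableSet.univ_pi hs)]
  have hind : ∀ y : Fin d → ℝ, (Set.univ.pi s).indicator (fun y => ∏ i, r i (y i)) y =
      ∏ i, ((s i).indicator (r i)) (y i) := by
    intro y
    by_cases hy : y ∈ Set.univ.pi s
    · rw [Set.indicator_of_mem hy]
      apply Finset.prod_congr rfl
      intro i _
      rw [Set.indicator_of_mem (hy i (Set.mem_univ i))]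
    · rw [Set.indicator_of_notMem hy]
      symm
      rw [Set.mem_univ_pi] at hy
      push_neg at hy
      obtain ⟨i, hi⟩ := hy
      apply Finset.prod_eq_zero (Finset.mem_univ i)
      rw [Set.indicator_of_notMem hi]
  calc ∫⁻ y, (Set.univ.pi s).indicator (fun y => ∏ i, r i (y i)) y ∂P
      = ∫⁻ y, ∏ i, ((s i).indicator (r i)) (y i) ∂P := by
        congr 1; funext y; exact hind y
    _ = ∏ i, ∫⁻ t, ((s i).indicator (r i)) t ∂(gaussianReal 0 v) := by
        rw [hP]
        exact lintegral_pi_prod d _ (fun i => (hrm i).indicator (hs i))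
    _ = ∏ i, (gaussianReal (c i) v) (s i) := by
        apply Finset.prod_congr rfl
        intro i _
        rw [lintegral_indicator (hs i), ← withDensity_apply _ (hs i)]
        have : (gaussianReal 0 v).withDensity (r i) = gaussianReal (c i) v := by
          rw [hr]
          exact tilt_one_dim hv (c i)
        rw [this]
end D2
section E
open MeasureTheory ProbabilityTheory Real Filter Set
open scoped NNReal ENNReal

variable {d : ℕ} {σ : ℝ}

instance gaussVec_prob (d : ℕ) (σ : ℝ) : IsProbabilityMeasure (gaussVec d σ) := by
  rw [gaussVec]
  haveI := @Measure.pi.instIsProbabilityMeasure _ _ _ _ (fun _ : Fin d => gaussianReal 0 (⟨σ ^ 2, sq_nonneg σ⟩ : NNReal)) (fun _ => instIsProbabilityMeasureGaussianReal 0 _)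
  exact Measure.isProbabilityMeasure_map (MeasurableEquiv.toLp 2 (Fin d → ℝ)).measurable.aemeasurable

lemma map_withDensity_equiv {α β : Type*} [MeasurableSpace α] [MeasurableSpace β]
    (φ : α ≃ᵐ β) (P : Measure α) (F : α → ℝ≥0∞) (hF : Measurable F) :
    (P.withDensity F).map φ = (P.map φ).withDensity (F ∘ φ.symm) := by
  ext s hs
  rw [Measure.map_apply φ.measurable hs, withDensity_apply _ (φ.measurable hs),
    withDensity_apply _ hs, setLIntegral_map hs (hF.comp φ.symm.measurable) φ.measurable]
  apply setLIntegral_congr_fun (φ.measurable hs)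
  intro x _
  simp

lemma gaussVec_map_add (hσ : 0 < σ) (δ : EuclideanSpace ℝ (Fin d)) :
    (gaussVec d σ).map (fun g => g + δ) =
      (gaussVec d σ).withDensity (fun g => ENNReal.ofReal (Real.exp
        ((2 * (∑ i, δ i * g i) - ∑ i, (δ i)^2) / (2 * σ^2)))) := by
  set v : ℝ≥0 := (⟨σ ^ 2, sq_nonneg σ⟩ : NNReal) with hvdef
  have hv : v ≠ 0 := by
    rw [hvdef]
    intro h
    have := congrArg (fun x : ℝ≥0 => (x:ℝ)) h
    simp only [NNReal.coe_mk, NNReal.coe_zero] at this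
    exact absurd this (pow_pos hσ 2).ne'
  set P := Measure.pi fun _ : Fin d => gaussianReal 0 v with hPdef
  set e := (MeasurableEquiv.toLp 2 (Fin d → ℝ)).symm with hedef
  set c : Fin d → ℝ := fun i => δ i with hcdef
  set F : (Fin d → ℝ) → ℝ≥0∞ := fun y => ENNReal.ofReal (Real.exp
    ((2 * (∑ i, c i * y i) - ∑ i, (c i)^2) / (2 * (v : ℝ)))) with hFdef
  have hFm : Measurable F := by rw [hFdef]; fun_prop
  have h1 : (gaussVec d σ).map (fun g => g + δ) = (P.map (fun y => y + c)).map ⇑e.symm := by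
    rw [gaussVec, Measure.map_map (measurable_add_const δ) (MeasurableEquiv.toLp 2 (Fin d → ℝ)).measurable,
      Measure.map_map e.symm.measurable (measurable_add_const c)]
    rfl
  rw [h1, pi_tilt hv c, map_withDensity_equiv e.symm P F hFm]
  rfl

lemma gaussVec_map_sum (hσ : 0 < σ) (δ : EuclideanSpace ℝ (Fin d)) (w : ℝ≥0)
    (hw : (w : ℝ) = ∑ i, (δ i)^2) :
    (gaussVec d σ).map (fun g => ∑ i, δ i * g i) =
      gaussianReal 0 ((w * ⟨σ ^ 2, sq_nonneg σ⟩ : ℝ≥0)) := by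
  have hS : Measurable (fun g : EuclideanSpace ℝ (Fin d) => ∑ i, δ i * g i) := by
    apply Finset.measurable_sum
    intro i _
    exact (measurable_const.mul ((measurable_pi_apply i).comp
      ((MeasurableEquiv.toLp 2 (Fin d → ℝ)).symm).measurable))
  rw [gaussVec, Measure.map_map hS (MeasurableEquiv.toLp 2 (Fin d → ℝ)).measurable]
  have h2 : ((fun g : EuclideanSpace ℝ (Fin d) => ∑ i, δ i * g i) ∘
      ⇑(MeasurableEquiv.toLp 2 (Fin d → ℝ))) = (fun y : Fin d → ℝ => ∑ i, δ i * y i) := rfl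
  rw [h2]
  exact map_sum_gauss d _ (fun i => δ i) w hw
end E
section NP
open MeasureTheory ProbabilityTheory Real Filter Set
open scoped NNReal ENNReal

lemma prob_compl_toReal {α : Type*} [MeasurableSpace α] (μ : Measure α) [IsProbabilityMeasure μ]
    {A : Set α} (hA : MeasurableSet A) : (μ Aᶜ).toReal = 1 - (μ A).toReal := by
  rw [measure_compl hA (measure_ne_top μ A), measure_univ,
    ENNReal.toReal_sub_of_le prob_le_one ENNReal.one_ne_top, ENNReal.toReal_one]

lemma shift_upper {d : ℕ} {σ : ℝ} (hσ : 0 < σ) (δ : EuclideanSpace ℝ (Fin d))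
    {A : Set (EuclideanSpace ℝ (Fin d))} (hA : MeasurableSet A) {q : ℝ}
    (hq : q ∈ Set.Ioo (0:ℝ) 1) (h : ((gaussVec d σ) A).toReal ≤ q) :
    ((gaussVec d σ) {g | g + δ ∈ A}).toReal ≤ Phi (PhiInv q + ‖δ‖ / σ) := by
  by_cases hδ : δ = 0
  · subst hδ
    have hset : {g : EuclideanSpace ℝ (Fin d) | g + 0 ∈ A} = A := by
      ext g; simp
    rw [hset, norm_zero, zero_div, add_zero, Phi_PhiInv hq]
    exact h
  set μ := gaussVec d σ with hμdef
  set r : ℝ := ‖δ‖ with hrdef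
  have hr : 0 < r := norm_pos_iff.mpr hδ
  set β : ℝ := PhiInv q with hβdef
  set S : EuclideanSpace ℝ (Fin d) → ℝ := fun g => ∑ i, δ i * g i with hSdef
  have hS : Measurable S := by
    apply Finset.measurable_sum
    intro i _
    exact (measurable_const.mul ((measurable_pi_apply i).comp
      ((MeasurableEquiv.toLp 2 (Fin d → ℝ)).symm).measurable))
  have hsum : ∑ i, (δ i)^2 = r^2 := by
    rw [hrdef, EuclideanSpace.norm_eq, Real.sq_sqrt (by positivity)]
    apply Finset.sum_congr rfl
    intro i _
    rw [Real.norm_eq_abs, sq_abs]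
  set w : ℝ≥0 := ⟨r^2, sq_nonneg r⟩ with hwdef
  have hw : (w : ℝ) = ∑ i, (δ i)^2 := by simp only [hwdef, NNReal.coe_mk, hsum]; rfl
  have hlaw := gaussVec_map_sum hσ δ w hw
  have hu : 0 < r * σ := by positivity
  have hV : ((w * ⟨σ ^ 2, sq_nonneg σ⟩ : ℝ≥0) : ℝ) = (r * σ)^2 := by
    show r^2 * σ^2 = (r*σ)^2
    ring
  have hlawIci : ∀ t : ℝ, (μ (S ⁻¹' Set.Ici t)).toReal = Phi (-(t / (r * σ))) := by
    intro t
    rw [hμdef, ← Measure.map_apply hS measurableSet_Ici, hlaw,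
      gauss_Ici_scaled (r * σ) hu _ hV t]
  set τ : ℝ := -(σ * β * r) with hτdef
  set H : Set (EuclideanSpace ℝ (Fin d)) := S ⁻¹' Set.Ici τ with hHdef
  have hHm : MeasurableSet H := hS measurableSet_Ici
  have hμH : (μ H).toReal = Phi β := by
    rw [hHdef, hlawIci τ]
    congr 1
    rw [hτdef]
    field_simp
  have hμHq : (μ H).toReal = q := by rw [hμH, hβdef, Phi_PhiInv hq]
  -- the shifted set of H
  have hSadd : ∀ g, S (g + δ) = S g + r^2 := by
    intro g
    rw [hSdef, ← hsum, ← Finset.sum_add_distrib]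
    apply Finset.sum_congr rfl
    intro i _
    have : (g + δ) i = g i + δ i := rfl
    rw [this]
    ring
  have hνH : (μ {g | g + δ ∈ H}).toReal = Phi (β + r / σ) := by
    have hset : {g | g + δ ∈ H} = S ⁻¹' Set.Ici (τ - r^2) := by
      ext g
      simp only [hHdef, Set.mem_setOf_eq, Set.mem_preimage, Set.mem_Ici]
      rw [hSadd g]
      constructor <;> intro hh <;> linarith
    rw [hset, hlawIci]
    congr 1
    rw [hτdef]
    field_simp
    ring
  -- density representation
  set L : EuclideanSpace ℝ (Fin d) → ℝ≥0∞ := fun g => ENNReal.ofReal (Real.exp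
    ((2 * (∑ i, δ i * g i) - ∑ i, (δ i)^2) / (2 * σ^2))) with hLdef
  have hLm : Measurable L := by
    rw [hLdef]
    fun_prop
  have hdens := gaussVec_map_add hσ δ
  have hrep : ∀ (B : Set (EuclideanSpace ℝ (Fin d))), MeasurableSet B →
      μ {g | g + δ ∈ B} = ∫⁻ g in B, L g ∂μ := by
    intro B hB
    have h1 : {g : EuclideanSpace ℝ (Fin d) | g + δ ∈ B} = (fun g => g + δ) ⁻¹' B := rfl
    rw [h1, ← Measure.map_apply (measurable_add_const δ) hB, hμdef, hdens,
      withDensity_apply _ hB]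
  set cst : ℝ≥0∞ := ENNReal.ofReal (Real.exp ((2 * τ - r^2) / (2 * σ^2))) with hcdef
  have hLle : ∀ g ∈ Hᶜ, L g ≤ cst := by
    intro g hg
    rw [hLdef, hcdef]
    apply ENNReal.ofReal_le_ofReal
    apply Real.exp_le_exp.mpr
    have hgH : S g < τ := by
      simp only [hHdef, Set.mem_compl_iff, Set.mem_preimage, Set.mem_Ici, not_le] at hg
      exact hg
    rw [hsum]
    apply div_le_div_of_nonneg_right _ (by positivity)
    have : S g = ∑ i, δ i * g i := rfl
    rw [← this]
    linarith
  have hLge : ∀ g ∈ H, cst ≤ L g := by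
    intro g hg
    rw [hLdef, hcdef]
    apply ENNReal.ofReal_le_ofReal
    apply Real.exp_le_exp.mpr
    have hgH : τ ≤ S g := hg
    rw [hsum]
    apply div_le_div_of_nonneg_right _ (by positivity)
    have : S g = ∑ i, δ i * g i := rfl
    rw [← this]
    linarith
  -- measure comparison
  have hμA_le_H : μ A ≤ μ H := by
    have h1 : (μ A).toReal ≤ (μ H).toReal := by rw [hμHq]; exact h
    exact (ENNReal.toReal_le_toReal (measure_ne_top _ _) (measure_ne_top _ _)).mp h1
  have hdiff : μ (A \ H) ≤ μ (H \ A) := by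
    have h1 : μ (A ∩ H) + μ (A \ H) = μ A := measure_inter_add_diff A hHm
    have h2 : μ (H ∩ A) + μ (H \ A) = μ H := measure_inter_add_diff H hA
    rw [Set.inter_comm] at h2
    have h3 : μ (A ∩ H) + μ (A \ H) ≤ μ (A ∩ H) + μ (H \ A) := by
      rw [h1, h2]; exact hμA_le_H
    exact (ENNReal.add_le_add_iff_left (measure_ne_top _ _)).mp h3
  have hint : ∫⁻ g in A \ H, L g ∂μ ≤ ∫⁻ g in H \ A, L g ∂μ := by
    calc ∫⁻ g in A \ H, L g ∂μ ≤ ∫⁻ _ in A \ H, cst ∂μ := by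
          apply setLIntegral_mono measurable_const
          intro g hg
          exact hLle g (fun hgH => hg.2 hgH)
      _ = cst * μ (A \ H) := by rw [setLIntegral_const]
      _ ≤ cst * μ (H \ A) := mul_le_mul_right hdiff cst
      _ = ∫⁻ _ in H \ A, cst ∂μ := by rw [setLIntegral_const]
      _ ≤ ∫⁻ g in H \ A, L g ∂μ := by
          apply setLIntegral_mono hLm
          intro g hg
          exact hLge g hg.1
  have hsplitA : ∫⁻ g in A, L g ∂μ = ∫⁻ g in A ∩ H, L g ∂μ + ∫⁻ g in A \ H, L g ∂μ := by
    rw [← lintegral_union (hA.diff hHm) (Set.disjoint_sdiff_inter).symm, Set.inter_union_diff]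
  have hsplitH : ∫⁻ g in H, L g ∂μ = ∫⁻ g in H ∩ A, L g ∂μ + ∫⁻ g in H \ A, L g ∂μ := by
    rw [← lintegral_union (hHm.diff hA) (Set.disjoint_sdiff_inter).symm, Set.inter_union_diff]
  have hfinal : μ {g | g + δ ∈ A} ≤ μ {g | g + δ ∈ H} := by
    rw [hrep A hA, hrep H hHm, hsplitA, hsplitH, Set.inter_comm H A]
    exact add_le_add le_rfl hint
  calc (μ {g | g + δ ∈ A}).toReal ≤ (μ {g | g + δ ∈ H}).toReal :=
        ENNReal.toReal_mono (measure_ne_top _ _) hfinal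
    _ = Phi (β + r / σ) := hνH
end NP
section NP2
open MeasureTheory ProbabilityTheory Real Filter Set
open scoped NNReal ENNReal

lemma shift_lower {d : ℕ} {σ : ℝ} (hσ : 0 < σ) (δ : EuclideanSpace ℝ (Fin d))
    {A : Set (EuclideanSpace ℝ (Fin d))} (hA : MeasurableSet A) {q : ℝ}
    (hq : q ∈ Set.Ioo (0:ℝ) 1) (h : q ≤ ((gaussVec d σ) A).toReal) :
    Phi (PhiInv q - ‖δ‖ / σ) ≤ ((gaussVec d σ) {g | g + δ ∈ A}).toReal := by
  have hq' : 1 - q ∈ Set.Ioo (0:ℝ) 1 := ⟨by linarith [hq.2], by linarith [hq.1]⟩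
  have hcompl : ((gaussVec d σ) Aᶜ).toReal ≤ 1 - q := by
    rw [prob_compl_toReal _ hA]
    linarith
  have hup := shift_upper hσ δ hA.compl hq' hcompl
  have hsetc : {g : EuclideanSpace ℝ (Fin d) | g + δ ∈ Aᶜ} = {g | g + δ ∈ A}ᶜ := rfl
  rw [hsetc, prob_compl_toReal (gaussVec d σ) (A := {g | g + δ ∈ A})
    ((measurable_add_const δ) hA)] at hup
  have hPhiInv : PhiInv (1 - q) = -(PhiInv q) := by
    have h1 : (1:ℝ) - q = Phi (-(PhiInv q)) := by
      rw [Phi_neg, Phi_PhiInv hq]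
    rw [h1, PhiInv_Phi]
  rw [hPhiInv] at hup
  have h2 : Phi (-(PhiInv q) + ‖δ‖ / σ) = 1 - Phi (PhiInv q - ‖δ‖ / σ) := by
    rw [show -(PhiInv q) + ‖δ‖ / σ = -(PhiInv q - ‖δ‖ / σ) by ring, Phi_neg]
  rw [h2] at hup
  linarith
end NP2

section Main
open MeasureTheory ProbabilityTheory Real Filter Set
open scoped NNReal ENNReal

theorem percentile_smoothing_robustness (d : ℕ) (σ : ℝ) (hσ : 0 < σ)
    (f : EuclideanSpace ℝ (Fin d) → ℝ) (hf : Measurable f)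
    (hb : ∃ C : ℝ, ∀ θ, |f θ| ≤ C) (p ε : ℝ) (hp : 0 < p) (hp1 : p < 1) (hε : 0 < ε)
    (x δ : EuclideanSpace ℝ (Fin d)) (hδ : ‖δ‖ < ε) :
    lowerPct (gaussVec d σ) f (Phi (PhiInv p - ε / σ)) x ≤
        lowerPct (gaussVec d σ) f p (x + δ) ∧
      upperPct (gaussVec d σ) f p (x + δ) ≤
        upperPct (gaussVec d σ) f (Phi (PhiInv p + ε / σ)) x := by
  obtain ⟨C, hC⟩ := hb
  have hpIoo : p ∈ Set.Ioo (0:ℝ) 1 := ⟨hp, hp1⟩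
  have hδε : ‖δ‖ / σ ≤ ε / σ := by gcongr
  have hAy : ∀ y : ℝ, MeasurableSet {g : EuclideanSpace ℝ (Fin d) | f (x + g) ≤ y} := by
    intro y
    exact (hf.comp (measurable_const_add x)) measurableSet_Iic
  have hshiftset : ∀ y : ℝ, {g : EuclideanSpace ℝ (Fin d) | f ((x + δ) + g) ≤ y} =
      {g | g + δ ∈ {h : EuclideanSpace ℝ (Fin d) | f (x + h) ≤ y}} := by
    intro y
    ext g
    simp only [Set.mem_setOf_eq]
    rw [show (x + δ) + g = x + (g + δ) by abel]
  have hempty : ∀ (z : EuclideanSpace ℝ (Fin d)) (y : ℝ), y < -C →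
      {g : EuclideanSpace ℝ (Fin d) | f (z + g) ≤ y} = ∅ := by
    intro z y hy
    ext g
    simp only [Set.mem_setOf_eq, Set.mem_empty_iff_false, iff_false, not_le]
    have := (abs_le.mp (hC (z + g))).1
    linarith
  have huniv : ∀ (z : EuclideanSpace ℝ (Fin d)) (y : ℝ), C ≤ y →
      {g : EuclideanSpace ℝ (Fin d) | f (z + g) ≤ y} = Set.univ := by
    intro z y hy
    ext g
    simp only [Set.mem_setOf_eq, Set.mem_univ, iff_true]
    have := (abs_le.mp (hC (z + g))).2
    linarith
  constructor
  · -- lower percentile part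
    set q := Phi (PhiInv p - ε / σ) with hqdef
    have hqIoo : q ∈ Set.Ioo (0:ℝ) 1 := ⟨Phi_pos _, Phi_lt_one _⟩
    apply csSup_le_csSup
    · -- BddAbove
      refine ⟨C, ?_⟩
      intro y hy
      simp only [Set.mem_setOf_eq] at hy
      by_contra hyC
      push_neg at hyC
      rw [huniv (x + δ) y hyC.le, measure_univ] at hy
      simp at hy
      linarith
    · -- Nonempty
      refine ⟨-C - 1, ?_⟩
      simp only [Set.mem_setOf_eq]
      rw [hempty x (-C - 1) (by linarith), measure_empty]
      simp only [ENNReal.toReal_zero]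
      exact hqIoo.1.le
    · -- subset
      intro y hy
      simp only [Set.mem_setOf_eq] at hy ⊢
      rw [hshiftset y]
      calc ((gaussVec d σ) {g | g + δ ∈ {h : EuclideanSpace ℝ (Fin d) | f (x + h) ≤ y}}).toReal
          ≤ Phi (PhiInv q + ‖δ‖ / σ) := shift_upper hσ δ (hAy y) hqIoo hy
        _ ≤ p := by
            rw [hqdef, PhiInv_Phi]
            have harg : PhiInv p - ε / σ + ‖δ‖ / σ ≤ PhiInv p := by linarith
            calc Phi (PhiInv p - ε / σ + ‖δ‖ / σ) ≤ Phi (PhiInv p) :=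
                  Phi_strictMono.monotone harg
              _ = p := Phi_PhiInv hpIoo
  · -- upper percentile part
    set q' := Phi (PhiInv p + ε / σ) with hq'def
    have hq'Ioo : q' ∈ Set.Ioo (0:ℝ) 1 := ⟨Phi_pos _, Phi_lt_one _⟩
    apply csInf_le_csInf
    · -- BddBelow
      refine ⟨-C, ?_⟩
      intro y hy
      simp only [Set.mem_setOf_eq] at hy
      by_contra hyC
      push_neg at hyC
      rw [hempty (x + δ) y hyC, measure_empty] at hy
      simp only [ENNReal.toReal_zero] at hy
      linarith
    · -- Nonempty
      refine ⟨C, ?_⟩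
      simp only [Set.mem_setOf_eq]
      rw [huniv x C le_rfl, measure_univ]
      simp only [ENNReal.toReal_one]
      exact hq'Ioo.2.le
    · -- subset
      intro y hy
      simp only [Set.mem_setOf_eq] at hy ⊢
      rw [hshiftset y]
      calc p = Phi (PhiInv p) := (Phi_PhiInv hpIoo).symm
        _ ≤ Phi (PhiInv p + ε / σ - ‖δ‖ / σ) := by
            apply Phi_strictMono.monotone
            linarith
        _ = Phi (PhiInv q' - ‖δ‖ / σ) := by rw [hq'def, PhiInv_Phi]
        _ ≤ ((gaussVec d σ) {g | g + δ ∈ {h : EuclideanSpace ℝ (Fin d) | f (x + h) ≤ y}}).toReal :=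
            shift_lower hσ δ (hAy y) hq'Ioo hy
end Main
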